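/- arXiv:math/0107095 — 3 statements merged into one kernel-verified Lean document; each statement's English description precedes it below -/
import Mathlib

section
/- If every tile of the tile set T is irreducible with respect to φ, then no two distinct tilings of a simply connected region R by tiles of T have the same height function. -/
/-- A square of the grid, indexed by its `(x, y)` coordinates. -/
abbrev Square : Type := ℤ × ℤ

/-- Two squares are adjacent if they share an edge. -/
def SqAdj (s t : Square) : Prop :=
  (s.1 = t.1 ∧ (s.2 = t.2 + 1 ∨ s.2 + 1 = t.2)) ∨
  (s.2 = t.2 ∧ (s.1 = t.1 + 1 ∨ s.1 + 1 = t.1))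

/-- A set of squares is connected with respect to edge-adjacency. -/
def ConnOn (S : Set Square) : Prop :=
  ∀ a ∈ S, ∀ b ∈ S, Relation.ReflTransGen (fun x y => x ∈ S ∧ y ∈ S ∧ SqAdj x y) a b

/-- Winding number of a sequence of squares around the square `p`: the signed
number of crossings of the upward vertical ray above (the center of) `p`;
a leftward horizontal move strictly above `p` counts `+1`, so that a
counterclockwise loop around `p` has winding number `+1`. -/
def sqWinding (p : Square) (L : List Square) : ℤ :=
  ((L.zip L.tail).map (fun ab : Square × Square =>
    if ab.1.2 = ab.2.2 ∧ p.2 < ab.1.2 ∧ ab.1.1 = p.1 + 1 ∧ ab.2.1 = p.1 then (1 : ℤ)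
    else if ab.1.2 = ab.2.2 ∧ p.2 < ab.1.2 ∧ ab.1.1 = p.1 ∧ ab.2.1 = p.1 + 1 then (-1 : ℤ)
    else 0)).sum

/-- A closed cycle of squares all lying in `S`. -/
def SqLoopIn (S : Set Square) (L : List Square) : Prop :=
  L ≠ [] ∧ (∀ s ∈ L, s ∈ S) ∧ L.Chain' SqAdj ∧ L.head? = L.getLast?

/-- A set of squares is simply connected if no cycle of squares in it encircles
a square outside of it with nonzero winding number. -/
def SimplyConnectedSq (S : Set Square) : Prop :=
  ∀ p : Square, p ∉ S → ∀ L : List Square, SqLoopIn S L → sqWinding p L = 0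

/-- A region: a finite, nonempty, connected set of squares. -/
def IsRegion (R : Finset Square) : Prop := R.Nonempty ∧ ConnOn ↑R

/-- A ribbon tile of order `n`: a connected set of `n` squares containing
exactly one square of each color `c`, where the square `(x, y)` has color
`(x + y) mod n`. -/
def IsRibbonTile (n : ℕ) (t : Finset Square) : Prop :=
  ConnOn ↑t ∧ t.card = n ∧
  ∀ c : ℤ, 0 ≤ c → c < n → ∃! s, s ∈ t ∧ (s.1 + s.2) % n = c

/-- An order-`n` ribbon tiling of `R`: a partition of `R` into order-`n`
ribbon tiles. -/
def IsRibbonTiling (n : ℕ) (R : Finset Square) (α : Finset (Finset Square)) : Prop :=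
  (∀ t ∈ α, IsRibbonTile n t) ∧ (∀ t ∈ α, t ⊆ R) ∧
  (∀ s ∈ R, ∃! t, t ∈ α ∧ s ∈ t)

/-- Two tilings differ by a local replacement move: one is obtained from the
other by removing a single pair of tiles and adding a different pair of tiles
covering the same squares. -/
def LocalMove (α β : Finset (Finset Square)) : Prop :=
  ∃ t₁ t₂ u₁ u₂ : Finset Square, t₁ ∈ α ∧ t₂ ∈ α ∧ t₁ ≠ t₂ ∧ u₁ ≠ u₂ ∧
    ({t₁, t₂} : Finset (Finset Square)) ≠ {u₁, u₂} ∧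
    t₁ ∪ t₂ = u₁ ∪ u₂ ∧
    β = (α \ {t₁, t₂}) ∪ {u₁, u₂}

/-- The "left of" relation on squares: `s` is directly left (same level,
smaller `x`) or indirectly left (levels differing by one, `x ≤ x'`, `y ≥ y'`)
of `s'`. -/
def sqPrec (s t : Square) : Prop :=
  (s.1 + s.2 = t.1 + t.2 ∧ s.1 < t.1) ∨
  (|s.1 + s.2 - (t.1 + t.2)| = 1 ∧ s.1 ≤ t.1 ∧ t.2 ≤ s.2)

/-- The "left of" relation for (sets of) squares: `t₁ ≺ t₂` if some square of
`t₁` is left of some square of `t₂`.  A single square `s` is treated as the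
singleton `{s}`. -/
def TilePrec (t₁ t₂ : Finset Square) : Prop :=
  ∃ s₁ ∈ t₁, ∃ s₂ ∈ t₂, sqPrec s₁ s₂

/-- The boundary `B_R` of a region: squares not in `R` adjacent to a square
of `R`. -/
def boundarySet (R : Finset Square) : Set Square :=
  {s | s ∉ R ∧ ∃ r ∈ R, SqAdj s r}

/-- The level of a tile: the level `x + y` of its lowest square. -/
def tileLevel (t : Finset Square) : ℤ := WithTop.untopD 0 ((t.image fun s : Square => s.1 + s.2).min)

/-- `IsNthTile α c i t`: `t` is the tile `t_{c,i}(α)`, i.e. the `i`-th tile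
(0-indexed, from left to right with respect to `≺`) of level `c` in the
tiling `α`. -/
def IsNthTile (α : Finset (Finset Square)) (c : ℤ) (i : ℕ) (t : Finset Square) : Prop :=
  t ∈ α ∧ tileLevel t = c ∧
  {t' : Finset Square | t' ∈ α ∧ t' ≠ t ∧ tileLevel t' = c ∧ TilePrec t' t}.ncard = i



/-- A lattice vertex (a corner of grid squares). -/
abbrev LVert : Type := ℤ × ℤ

/-- Two lattice vertices joined by a unit edge. -/
def VAdj (a b : LVert) : Prop :=
  (a.1 = b.1 ∧ (a.2 = b.2 + 1 ∨ a.2 + 1 = b.2)) ∨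
  (a.2 = b.2 ∧ (a.1 = b.1 + 1 ∨ a.1 + 1 = b.1))

/-- The (at most) two squares flanking the lattice edge with endpoints
`a`, `b` (for a unit edge). The square `(x, y)` has corners `(x, y)`,
`(x+1, y)`, `(x, y+1)`, `(x+1, y+1)`. -/
def edgeSquares (a b : LVert) : Set Square :=
  if a.1 = b.1 then {(a.1 - 1, min a.2 b.2), (a.1, min a.2 b.2)}
  else {(min a.1 b.1, a.2 - 1), (min a.1 b.1, a.2)}

/-- `v` is a corner of the square `s`. -/
def IsCornerOf (v : LVert) (s : Square) : Prop :=
  (v.1 = s.1 ∨ v.1 = s.1 + 1) ∧ (v.2 = s.2 ∨ v.2 = s.2 + 1)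

/-- `v` is a vertex of the region `R`. -/
def VertexOfR (R : Finset Square) (v : LVert) : Prop :=
  ∃ s ∈ R, IsCornerOf v s

/-- `v` is a vertex on the boundary of the region `R`. -/
def BoundaryVertexR (R : Finset Square) (v : LVert) : Prop :=
  (∃ s ∈ R, IsCornerOf v s) ∧ (∃ s : Square, s ∉ R ∧ IsCornerOf v s)

/-- The sum of `φ` over the four clockwise-oriented edges of the square `s`
(with the `x`-axis pointing right and the `y`-axis pointing up). -/
def phiSq {G : Type*} [AddCommGroup G] (φ : LVert → LVert → G) (s : Square) : G :=
  φ (s.1, s.2) (s.1, s.2 + 1) + φ (s.1, s.2 + 1) (s.1 + 1, s.2 + 1) +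
    φ (s.1 + 1, s.2 + 1) (s.1 + 1, s.2) + φ (s.1 + 1, s.2) (s.1, s.2)

/-- The edge `(a, b)` is an interior edge of the tile `t`: both flanking
squares belong to `t`. -/
def InteriorEdgeOf (t : Finset Square) (a b : LVert) : Prop :=
  VAdj a b ∧ ∀ s ∈ edgeSquares a b, s ∈ t

/-- The edge `(a, b)` is a boundary edge of the tile `t`. -/
def BoundaryEdgeOf (t : Finset Square) (a b : LVert) : Prop :=
  VAdj a b ∧ (∃ s ∈ edgeSquares a b, s ∈ t) ∧ (∃ s ∈ edgeSquares a b, s ∉ t)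

/-- `v` lies on the boundary of the tile `t`. -/
def OnBoundaryOf (t : Finset Square) (v : LVert) : Prop :=
  ∃ w : LVert, BoundaryEdgeOf t v w

/-- The edge `(a, b)` crosses a tile of the tiling `α` (it lies between two
squares of one tile). -/
def CrossesTile (α : Finset (Finset Square)) (a b : LVert) : Prop :=
  ∃ t ∈ α, InteriorEdgeOf t a b

/-- A tiling of the region `R` by tiles from the tile set `T`. -/
def IsTilingBy (T : Set (Finset Square)) (R : Finset Square)
    (α : Finset (Finset Square)) : Prop :=
  (∀ t ∈ α, t ∈ T) ∧ (∀ t ∈ α, t ⊆ R) ∧ (∀ s ∈ R, ∃! t, t ∈ α ∧ s ∈ t)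

/-- Winding number of a closed sequence of lattice vertices around (the
center of) the square `s`: the signed number of crossings of the upward
vertical ray above `s`; a leftward step strictly above `s` counts `+1`, so a
counterclockwise loop around `s` has winding number `+1`. -/
def vWinding (s : Square) (L : List LVert) : ℤ :=
  ((L.zip L.tail).map (fun ab : LVert × LVert =>
    if ab.1.2 = ab.2.2 ∧ s.2 + 1 ≤ ab.1.2 ∧ ab.1.1 = s.1 + 1 ∧ ab.2.1 = s.1 then (1 : ℤ)
    else if ab.1.2 = ab.2.2 ∧ s.2 + 1 ≤ ab.1.2 ∧ ab.1.1 = s.1 ∧ ab.2.1 = s.1 + 1 then (-1 : ℤ)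
    else 0)).sum

/-- The path `seg` (a maximal list of vertices of the original path lying
inside one tile `t` of `α`) passes the square `s` on the left: its endpoints
`vi`, `vj` lie on the boundary of `t`, all its edges are interior edges of
`t`, and `s` lies inside the closed polygon formed by `seg` together with the
counterclockwise half `q` of the boundary of `t` connecting `vi` to `vj`
(`q'` being the complementary half, so that `q` followed by `q'` is the full
boundary cycle of `t`, traversed counterclockwise). -/
def PassesLeftSeg (α : Finset (Finset Square)) (seg : List LVert) (s : Square) : Prop :=
  ∃ t ∈ α, ∃ vi vj : LVert,
    seg.head? = some vi ∧ seg.getLast? = some vj ∧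
    OnBoundaryOf t vi ∧ OnBoundaryOf t vj ∧
    seg.Chain' (InteriorEdgeOf t) ∧
    ∃ q q' : List LVert,
      q.head? = some vi ∧ q.getLast? = some vj ∧
      q'.head? = some vj ∧ q'.getLast? = some vi ∧
      q.Chain' (BoundaryEdgeOf t) ∧ q'.Chain' (BoundaryEdgeOf t) ∧
      (∀ s' ∈ t, vWinding s' (q ++ q'.tail) = 1) ∧
      vWinding s (seg ++ q.reverse.tail) ≠ 0

/-- The sublist of the indexed path `p` from index `i` to index `j`. -/
def segList (p : ℕ → LVert) (i j : ℕ) : List LVert :=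
  (List.range (j - i + 1)).map fun r => p (i + r)



/-- `E` is (the edge relation of) a spanning tree of the squares of `t`:
a symmetric subrelation of adjacency on `t`, connecting all of `t`, with no
simple cycle. -/
def IsSpanningTree (t : Finset Square) (E : Square → Square → Prop) : Prop :=
  (∀ a b, E a b → a ∈ t ∧ b ∈ t ∧ SqAdj a b) ∧
  (∀ a b, E a b → E b a) ∧
  (∀ a ∈ t, ∀ b ∈ t, Relation.ReflTransGen E a b) ∧
  (∀ (k : ℕ) (f : ℕ → Square), 2 < k → (∀ m < k, E (f m) (f (m + 1))) →
    f k = f 0 → ¬ (∀ m < k, ∀ m' < k, f m = f m' → m = m'))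

/-- The edge `(a, b)` lies between two squares of a tile of `α` that are
adjacent in that tile's spanning tree; across such edges the height function
is unconstrained. -/
def TreeCross (α : Finset (Finset Square)) (Etree : Finset Square → Square → Square → Prop)
    (a b : LVert) : Prop :=
  ∃ t ∈ α, ∃ s ∈ edgeSquares a b, ∃ s' ∈ edgeSquares a b,
    s ≠ s' ∧ s ∈ t ∧ s' ∈ t ∧ Etree t s s'

/-- `h` is the height function of the tiling `α` of `R` (with the given
spanning trees), with respect to `φ` and the reference vertex `v₀`:
`h v₀ = 0` and `h` changes by `φ` along every edge of `R` whose two incident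
squares lie in different tiles or are non-adjacent in their tile's spanning
tree. -/
def IsHeightFunction {G : Type*} [AddCommGroup G] (φ : LVert → LVert → G)
    (R : Finset Square) (α : Finset (Finset Square))
    (Etree : Finset Square → Square → Square → Prop)
    (v₀ : LVert) (h : LVert → G) : Prop :=
  h v₀ = 0 ∧
  ∀ a b : LVert, VAdj a b → VertexOfR R a → VertexOfR R b →
    ¬ TreeCross α Etree a b → h b - h a = φ a b

/-- The tile `t` is irreducible with respect to `φ`: it cannot be partitioned
into two or more admissible polyominoes (nonempty connected pieces `u` with
`φ(u) = 0`). -/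
def IrreducibleTile {G : Type*} [AddCommGroup G] (φ : LVert → LVert → G)
    (t : Finset Square) : Prop :=
  ¬ ∃ P : Finset (Finset Square), 2 ≤ P.card ∧
      (∀ u ∈ P, u.Nonempty ∧ ConnOn ↑u) ∧
      (∀ u ∈ P, u ⊆ t) ∧
      (∀ s ∈ t, ∃! u, u ∈ P ∧ s ∈ u) ∧
      (∀ u ∈ P, ∑ s ∈ u, phiSq φ s = 0)

/-! Fix a tile `t` of `α` and cut it into the connected pieces of its intersections with the
tiles of `β`. The two squares along a boundary edge of a piece lie in different tiles of `α` or
in different tiles of `β`, so the common height function changes by `φ` across that edge; by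
the discrete Stokes formula every piece is then admissible. Irreducibility of `t` leaves a
single piece, so every tile of `α` lies in a tile of `β` and vice versa, whence `α = β`. -/

open Relation

section EdgeGeometry

variable {a b : LVert} {x y p q : Square}

lemma edgeSquares_eq_pair (a b : LVert) : ∃ p q, edgeSquares a b = {p, q} := by
  unfold edgeSquares
  split_ifs
  exacts [⟨_, _, rfl⟩, ⟨_, _, rfl⟩]

lemma eq_or_eq_of_mem_edgeSquares (hx : x ∈ edgeSquares a b) (hy : y ∈ edgeSquares a b)
    (hxy : x ≠ y) (hp : p ∈ edgeSquares a b) : p = x ∨ p = y := by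
  obtain ⟨u, v, huv⟩ := edgeSquares_eq_pair a b
  rw [huv] at hx hy hp
  simp only [Set.mem_insert_iff, Set.mem_singleton_iff] at hx hy hp
  rcases hx with rfl | rfl <;> rcases hy with rfl | rfl <;> tauto

lemma isCornerOf_of_mem_edgeSquares (hab : VAdj a b) (hx : x ∈ edgeSquares a b) :
    IsCornerOf a x ∧ IsCornerOf b x := by
  unfold edgeSquares at hx
  unfold VAdj at hab
  unfold IsCornerOf
  split_ifs at hx <;>
    simp only [Set.mem_insert_iff, Set.mem_singleton_iff, Prod.ext_iff] at hx <;> omega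

lemma sqAdj_of_mem_edgeSquares (hx : x ∈ edgeSquares a b)
    (hy : y ∈ edgeSquares a b) (hxy : x ≠ y) : SqAdj x y := by
  unfold edgeSquares at hx hy
  unfold SqAdj
  rw [Ne, Prod.ext_iff] at hxy
  split_ifs at hx hy <;>
    simp only [Set.mem_insert_iff, Set.mem_singleton_iff, Prod.ext_iff] at hx hy <;> omega

lemma sqAdj_symm (h : SqAdj x y) : SqAdj y x := by
  unfold SqAdj at *
  omega

lemma boundaryEdgeOf_of_mem_pair {u : Finset Square} (hab : VAdj a b)
    (hpq : edgeSquares a b = {p, q}) (h : p ∈ u ↔ q ∉ u) : BoundaryEdgeOf u a b := by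
  refine ⟨hab, ?_, ?_⟩ <;> rw [hpq] <;> by_cases hp : p ∈ u
  exacts [⟨p, by simp, hp⟩, ⟨q, by simp, by tauto⟩, ⟨q, by simp, by tauto⟩, ⟨p, by simp, hp⟩]

lemma boundaryEdgeOf_left {u : Finset Square} (h : p ∈ u ↔ (p.1 - 1, p.2) ∉ u) :
    BoundaryEdgeOf u (p.1, p.2) (p.1, p.2 + 1) := by
  refine boundaryEdgeOf_of_mem_pair (p := p) (q := (p.1 - 1, p.2))
    (by unfold VAdj; omega) ?_ h
  simp [edgeSquares, Set.pair_comm]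

lemma boundaryEdgeOf_top {u : Finset Square} (h : p ∈ u ↔ (p.1, p.2 + 1) ∉ u) :
    BoundaryEdgeOf u (p.1, p.2 + 1) (p.1 + 1, p.2 + 1) := by
  refine boundaryEdgeOf_of_mem_pair (p := p) (q := (p.1, p.2 + 1))
    (by unfold VAdj; omega) ?_ h
  simp [edgeSquares]

end EdgeGeometry

lemma Finset.sum_comp_add_eq_sum {M α : Type*} [AddCommMonoid M] [AddCommGroup α]
    [DecidableEq α] (u : Finset α) (d : α) (f : α → M)
    (hf : ∀ p, (p ∈ u ↔ p - d ∉ u) → f p = 0) :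
    ∑ s ∈ u, f (s + d) = ∑ s ∈ u, f s := by
  have hmem : ∀ p, p ∈ u.image (· + d) ↔ p - d ∈ u := fun p => by
    simp [sub_eq_add_neg]
  rw [← Finset.sum_image (fun _ _ _ _ => add_right_cancel)]
  calc ∑ s ∈ u.image (· + d), f s = ∑ s ∈ u.image (· + d) ∪ u, f s :=
        Finset.sum_subset Finset.subset_union_left fun p hp hp' => hf p <| by
          simp only [Finset.mem_union, hmem] at hp hp' ⊢; tauto
    _ = ∑ s ∈ u, f s :=
        (Finset.sum_subset Finset.subset_union_right fun p hp hp' => hf p <| by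
          simp only [Finset.mem_union, hmem] at hp hp' ⊢; tauto).symm

section Stokes

variable {G : Type*} [AddCommGroup G] {φ : LVert → LVert → G}

lemma sum_phiSq_eq_zero_of_boundary (hanti : ∀ a b, φ a b = -φ b a) (u : Finset Square)
    (hφ : ∀ a b, BoundaryEdgeOf u a b → φ a b = 0) : ∑ s ∈ u, phiSq φ s = 0 := by
  classical
  set left : Square → G := fun p => φ (p.1, p.2) (p.1, p.2 + 1)
  set top : Square → G := fun p => φ (p.1, p.2 + 1) (p.1 + 1, p.2 + 1)
  -- each edge is the left or top edge of one square and the right or bottom edge of the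
  -- neighbouring one, so after shifting, only the boundary edges of `u` remain
  have hcurl : ∀ s : Square,
      phiSq φ s = left s + top s - left (s + (1, 0)) - top (s + (0, -1)) := fun s => by
    simp only [phiSq, left, top, Prod.fst_add, Prod.snd_add, add_zero, neg_add_cancel_right]
    rw [hanti (s.1 + 1, s.2 + 1) (s.1 + 1, s.2), hanti (s.1 + 1, s.2) (s.1, s.2)]
    abel
  have hleft := Finset.sum_comp_add_eq_sum u (1, 0) left fun p hp =>
    hφ _ _ <| boundaryEdgeOf_left <| by
      rwa [show p - (1, 0) = (p.1 - 1, p.2) by ext <;> simp] at hp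
  have htop := Finset.sum_comp_add_eq_sum u (0, -1) top fun p hp =>
    hφ _ _ <| boundaryEdgeOf_top <| by
      rwa [show p - (0, -1) = (p.1, p.2 + 1) by ext <;> simp] at hp
  simp only [hcurl, Finset.sum_sub_distrib, Finset.sum_add_distrib, hleft, htop]
  abel

lemma sum_phiSq_eq_zero_of_potential_on_boundary (hanti : ∀ a b, φ a b = -φ b a)
    (u : Finset Square) (h : LVert → G)
    (hh : ∀ a b, BoundaryEdgeOf u a b → h b - h a = φ a b) : ∑ s ∈ u, phiSq φ s = 0 := by
  have hcoboundary : ∀ s, phiSq φ s = phiSq (fun a b => φ a b - (h b - h a)) s := fun s => by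
    simp only [phiSq]
    abel
  simp only [hcoboundary]
  refine sum_phiSq_eq_zero_of_boundary (fun a b => ?_) u fun a b hab => ?_
  · rw [hanti a b]
    abel
  · rw [hh a b hab, sub_self]

end Stokes

section Components

variable {ι : Type*} {r : ι → ι → Prop} {t : Finset ι} {s x : ι}

open scoped Classical in
noncomputable def componentIn (r : ι → ι → Prop) (t : Finset ι) (s : ι) : Finset ι :=
  t.filter (ReflTransGen r s)

lemma mem_componentIn : x ∈ componentIn r t s ↔ x ∈ t ∧ ReflTransGen r s x := by
  classical
  simp [componentIn]

lemma mem_componentIn_self (hs : s ∈ t) : s ∈ componentIn r t s :=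
  mem_componentIn.2 ⟨hs, .refl⟩

lemma componentIn_eq_of_reflTransGen [Std.Symm r] (h : ReflTransGen r s x) :
    componentIn r t s = componentIn r t x := by
  ext y
  simp only [mem_componentIn]
  exact and_congr_right fun _ => ⟨(symm h).trans, h.trans⟩

end Components

lemma connOn_componentIn {r : Square → Square → Prop} [Std.Symm r] {t : Finset Square}
    (hr : ∀ x y, r x y → y ∈ t ∧ SqAdj x y) (s : Square) : ConnOn ↑(componentIn r t s) := by
  intro x hx y hy
  rw [Finset.mem_coe] at hx hy
  have hxy : ReflTransGen r x y :=
    (symm (mem_componentIn.1 hx).2).trans (mem_componentIn.1 hy).2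
  suffices ∀ z, ReflTransGen r x z → z ∈ componentIn r t s ∧
      ReflTransGen (fun p q => p ∈ (componentIn r t s : Set Square) ∧
        q ∈ (componentIn r t s : Set Square) ∧ SqAdj p q) x z from (this y hxy).2
  intro z hxz
  induction hxz with
  | refl => exact ⟨hx, .refl⟩
  | @tail m z hxm hmz ih =>
    have hz : z ∈ componentIn r t s :=
      mem_componentIn.2 ⟨(hr m z hmz).1, ((mem_componentIn.1 hx).2.trans hxm).tail hmz⟩
    exact ⟨hz, ih.2.tail ⟨ih.1, hz, (hr m z hmz).2⟩⟩

lemma IrreducibleTile.reflTransGen {G : Type*} [AddCommGroup G] {φ : LVert → LVert → G}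
    {t : Finset Square} (hirr : IrreducibleTile φ t) {r : Square → Square → Prop} [Std.Symm r]
    (hr : ∀ x y, r x y → y ∈ t ∧ SqAdj x y)
    (hadm : ∀ s ∈ t, ∑ x ∈ componentIn r t s, phiSq φ x = 0) {x y : Square}
    (hx : x ∈ t) (hy : y ∈ t) : ReflTransGen r x y := by
  classical
  by_contra hxy
  refine hirr ⟨t.image (componentIn r t), ?_, ?_, ?_, ?_, ?_⟩
  · refine Finset.one_lt_card.2 ⟨_, Finset.mem_image_of_mem _ hx, _,
      Finset.mem_image_of_mem _ hy, fun h => hxy ?_⟩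
    exact (mem_componentIn.1 (h ▸ mem_componentIn_self hy)).2
  · simp only [Finset.mem_image]
    rintro _ ⟨s, hs, rfl⟩
    exact ⟨⟨s, mem_componentIn_self hs⟩, connOn_componentIn hr s⟩
  · simp only [Finset.mem_image]
    rintro _ ⟨s, -, rfl⟩
    exact Finset.filter_subset _ _
  · intro s hs
    refine ⟨componentIn r t s, ⟨Finset.mem_image_of_mem _ hs, mem_componentIn_self hs⟩, ?_⟩
    simp only [Finset.mem_image]
    rintro _ ⟨⟨s', -, rfl⟩, hss'⟩
    exact componentIn_eq_of_reflTransGen (mem_componentIn.1 hss').2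
  · simp only [Finset.mem_image]
    rintro _ ⟨s, hs, rfl⟩
    exact hadm s hs

namespace IsTilingBy

variable {T : Set (Finset Square)} {R : Finset Square} {α β : Finset (Finset Square)}

lemma eq_of_mem (hα : IsTilingBy T R α) {t t' : Finset Square} {s : Square} (ht : t ∈ α)
    (ht' : t' ∈ α) (hs : s ∈ t) (hs' : s ∈ t') : t = t' :=
  (hα.2.2 s (hα.2.1 t ht hs)).unique ⟨ht, hs⟩ ⟨ht', hs'⟩

lemma subset_of_refines (hα : IsTilingBy T R α) (hne : ∀ t ∈ α, t.Nonempty)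
    (hαβ : ∀ t ∈ α, ∃ t' ∈ β, t ⊆ t') (hβα : ∀ t ∈ β, ∃ t' ∈ α, t ⊆ t') : α ⊆ β := by
  intro t ht
  obtain ⟨t', ht', htt'⟩ := hαβ t ht
  obtain ⟨t'', ht'', ht't''⟩ := hβα t' ht'
  obtain ⟨s, hs⟩ := hne t ht
  have htt'' : t = t'' := hα.eq_of_mem ht ht'' hs (ht't'' (htt' hs))
  rwa [htt'.antisymm (htt'' ▸ ht't'')]

end IsTilingBy

def SameTileAdj (β : Finset (Finset Square)) (t : Finset Square) (x y : Square) : Prop :=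
  x ∈ t ∧ y ∈ t ∧ SqAdj x y ∧ ∃ b ∈ β, x ∈ b ∧ y ∈ b

instance (β : Finset (Finset Square)) (t : Finset Square) : Std.Symm (SameTileAdj β t) :=
  ⟨fun _ _ ⟨hx, hy, hxy, b, hb, hxb, hyb⟩ => ⟨hy, hx, sqAdj_symm hxy, b, hb, hyb, hxb⟩⟩

lemma IsTilingBy.mem_of_reflTransGen_sameTileAdj {T : Set (Finset Square)} {R : Finset Square}
    {β : Finset (Finset Square)} (hβ : IsTilingBy T R β) {t b : Finset Square} (hb : b ∈ β)
    {x y : Square} (hx : x ∈ b) (hxy : ReflTransGen (SameTileAdj β t) x y) : y ∈ b := by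
  induction hxy with
  | refl => exact hx
  | tail _ hmz ih =>
    obtain ⟨-, -, -, b', hb', hmb', hzb'⟩ := hmz
    exact hβ.eq_of_mem hb' hb hmb' ih ▸ hzb'

section HeightFunction

variable {G : Type*} [AddCommGroup G] {φ : LVert → LVert → G} {R : Finset Square}
  {α β : Finset (Finset Square)} {E : Finset Square → Square → Square → Prop} {v₀ : LVert}
  {h : LVert → G}

lemma not_treeCross {a b : LVert} {x y : Square} (hx : x ∈ edgeSquares a b)
    (hy : y ∈ edgeSquares a b) (hxy : x ≠ y) (hsep : ¬∃ t ∈ α, x ∈ t ∧ y ∈ t) :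
    ¬TreeCross α E a b := by
  rintro ⟨t, ht, p, hp, q, hq, hpq, hpt, hqt, -⟩
  refine hsep ⟨t, ht, ?_⟩
  rcases eq_or_eq_of_mem_edgeSquares hx hy hxy hp with rfl | rfl <;>
    rcases eq_or_eq_of_mem_edgeSquares hx hy hxy hq with rfl | rfl
  exacts [absurd rfl hpq, ⟨hpt, hqt⟩, ⟨hqt, hpt⟩, absurd rfl hpq]

lemma IsHeightFunction.sub_eq_of_separated (hh : IsHeightFunction φ R α E v₀ h) {a b : LVert}
    (hab : VAdj a b) {x y : Square} (hx : x ∈ edgeSquares a b) (hy : y ∈ edgeSquares a b)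
    (hxy : x ≠ y) (hxR : x ∈ R) (hsep : ¬∃ t ∈ α, x ∈ t ∧ y ∈ t) : h b - h a = φ a b :=
  hh.2 a b hab ⟨x, hxR, (isCornerOf_of_mem_edgeSquares hab hx).1⟩
    ⟨x, hxR, (isCornerOf_of_mem_edgeSquares hab hx).2⟩ (not_treeCross hx hy hxy hsep)

end HeightFunction

section Refinement

variable {G : Type*} [AddCommGroup G] {φ : LVert → LVert → G} {T : Set (Finset Square)}
  {R : Finset Square} {α β : Finset (Finset Square)}
  {Eα Eβ : Finset Square → Square → Square → Prop} {v₀ : LVert} {h₁ h₂ : LVert → G}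

lemma sub_eq_of_boundaryEdgeOf_componentIn (hα : IsTilingBy T R α) {t : Finset Square}
    (ht : t ∈ α) (hh₁ : IsHeightFunction φ R α Eα v₀ h₁) (hh₂ : IsHeightFunction φ R β Eβ v₀ h₂)
    (hsame : ∀ v, VertexOfR R v → h₁ v = h₂ v) (s : Square) {a b : LVert}
    (hab : BoundaryEdgeOf (componentIn (SameTileAdj β t) t s) a b) : h₁ b - h₁ a = φ a b := by
  obtain ⟨hv, ⟨x, hx, hxu⟩, ⟨y, hy, hyu⟩⟩ := hab
  have hxy : x ≠ y := by rintro rfl; exact hyu hxu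
  obtain ⟨hxt, hsx⟩ := mem_componentIn.1 hxu
  have hxR : x ∈ R := hα.2.1 t ht hxt
  by_cases hyt : y ∈ t
  · have hsep : ¬∃ b ∈ β, x ∈ b ∧ y ∈ b := fun hxyb =>
      hyu <| mem_componentIn.2
        ⟨hyt, hsx.tail ⟨hxt, hyt, sqAdj_of_mem_edgeSquares hx hy hxy, hxyb⟩⟩
    have hcorner := isCornerOf_of_mem_edgeSquares hv hx
    rw [hsame a ⟨x, hxR, hcorner.1⟩, hsame b ⟨x, hxR, hcorner.2⟩]
    exact hh₂.sub_eq_of_separated hv hx hy hxy hxR hsep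
  · refine hh₁.sub_eq_of_separated hv hx hy hxy hxR ?_
    rintro ⟨t', ht', hxt', hyt'⟩
    exact hyt (hα.eq_of_mem ht' ht hxt' hxt ▸ hyt')

lemma exists_superset_tile_of_heightFunction_eq (hanti : ∀ a b, φ a b = -φ b a)
    (hne : ∀ t ∈ T, t.Nonempty) (hirr : ∀ t ∈ T, IrreducibleTile φ t)
    (hα : IsTilingBy T R α) (hβ : IsTilingBy T R β)
    (hh₁ : IsHeightFunction φ R α Eα v₀ h₁) (hh₂ : IsHeightFunction φ R β Eβ v₀ h₂)
    (hsame : ∀ v, VertexOfR R v → h₁ v = h₂ v) : ∀ t ∈ α, ∃ t' ∈ β, t ⊆ t' := by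
  intro t ht
  obtain ⟨s₀, hs₀⟩ := hne t (hα.1 t ht)
  obtain ⟨b, ⟨hb, hs₀b⟩, -⟩ := hβ.2.2 s₀ (hα.2.1 t ht hs₀)
  have hadm (s : Square) (_ : s ∈ t) :
      ∑ x ∈ componentIn (SameTileAdj β t) t s, phiSq φ x = 0 :=
    sum_phiSq_eq_zero_of_potential_on_boundary hanti _ h₁ fun _ _ =>
      sub_eq_of_boundaryEdgeOf_componentIn hα ht hh₁ hh₂ hsame s
  have hconn (x : Square) (hx : x ∈ t) : ReflTransGen (SameTileAdj β t) s₀ x :=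
    (hirr t (hα.1 t ht)).reflTransGen (fun _ _ hxy => ⟨hxy.2.1, hxy.2.2.1⟩) hadm hs₀ hx
  exact ⟨b, hb, fun x hx => hβ.mem_of_reflTransGen_sameTileAdj hb hs₀b (hconn x hx)⟩

end Refinement

theorem irreducible_tiles_height_determines_tiling_general
    {G : Type*} [AddCommGroup G]
    (T : Set (Finset Square))
    (hT : ∀ t ∈ T, t.Nonempty ∧ ConnOn ↑t ∧ SimplyConnectedSq ↑t)
    (φ : LVert → LVert → G)
    (hanti : ∀ a b : LVert, φ a b = - φ b a)
    (hirr : ∀ t ∈ T, IrreducibleTile φ t)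
    (R : Finset Square)
    (v₀ : LVert)
    (α β : Finset (Finset Square))
    (hα : IsTilingBy T R α) (hβ : IsTilingBy T R β)
    (Eα Eβ : Finset Square → Square → Square → Prop)
    (h₁ h₂ : LVert → G)
    (hh₁ : IsHeightFunction φ R α Eα v₀ h₁)
    (hh₂ : IsHeightFunction φ R β Eβ v₀ h₂)
    (hsame : ∀ v : LVert, VertexOfR R v → h₁ v = h₂ v) :
    α = β := by
  have hne : ∀ t ∈ T, t.Nonempty := fun t ht => (hT t ht).1
  have hαβ := exists_superset_tile_of_heightFunction_eq hanti hne hirr hα hβ hh₁ hh₂ hsame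
  have hβα := exists_superset_tile_of_heightFunction_eq hanti hne hirr hβ hα hh₂ hh₁
    fun v hv => (hsame v hv).symm
  exact (hα.subset_of_refines (fun t ht => hne t (hα.1 t ht)) hαβ hβα).antisymm
    (hβ.subset_of_refines (fun t ht => hne t (hβ.1 t ht)) hβα hαβ)

/-- If every tile of the tile set `T` is irreducible with
respect to `φ`, then no two distinct tilings of a simply connected region `R`
by tiles of `T` have the same height function. -/
theorem irreducible_tiles_height_determines_tiling
    {G : Type*} [AddCommGroup G]
    (T : Set (Finset Square))
    (hT : ∀ t ∈ T, t.Nonempty ∧ ConnOn ↑t ∧ SimplyConnectedSq ↑t)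
    (φ : LVert → LVert → G)
    (hanti : ∀ a b : LVert, φ a b = - φ b a)
    (hrel : ∀ t ∈ T, ∑ s ∈ t, phiSq φ s = 0)
    (hirr : ∀ t ∈ T, IrreducibleTile φ t)
    (R : Finset Square) (hreg : IsRegion R) (hsc : SimplyConnectedSq ↑R)
    (v₀ : LVert) (hv₀ : BoundaryVertexR R v₀)
    (α β : Finset (Finset Square))
    (hα : IsTilingBy T R α) (hβ : IsTilingBy T R β)
    (Eα Eβ : Finset Square → Square → Square → Prop)
    (hEα : ∀ t ∈ α, IsSpanningTree t (Eα t))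
    (hEβ : ∀ t ∈ β, IsSpanningTree t (Eβ t))
    (h₁ h₂ : LVert → G)
    (hh₁ : IsHeightFunction φ R α Eα v₀ h₁)
    (hh₂ : IsHeightFunction φ R β Eβ v₀ h₂)
    (hsame : ∀ v : LVert, VertexOfR R v → h₁ v = h₂ v) :
    α = β :=
  irreducible_tiles_height_determines_tiling_general T hT φ hanti hirr R v₀ α β hα hβ Eα Eβ h₁ h₂
    hh₁ hh₂ hsame
end

section
/- Let R be a simply connected region and α an order-n ribbon tiling of R. Then for any two distinct tiles t₁, t₂ of α whose union t₁ ∪ t₂ is connected, the union t₁ ∪ t₂ is simply connected. -/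
/-!
Suppose a loop in `t₁ ∪ t₂` winds around a square `p ∉ t₁ ∪ t₂`. Since `R` is simply connected,
`p ∈ R`, so `p` lies in a third tile `t₃`; it avoids the loop, so the winding number is constant,
and nonzero, on the connected set `t₃`. The winding number does not change between adjacent
squares off the loop, hence a square `s` of greatest level `ℓ` with nonzero winding number has its
upper and right neighbours on the loop. These are distinct squares of level `ℓ + 1`, and a ribbon
tile has one square per level, so both `t₁` and `t₂` reach level `ℓ + 1`. On the other hand `t₃`
spans `n` levels, all `≤ ℓ`, and straight below its lowest square the loop passes through a square
of `t₁` or `t₂` of level `< ℓ + 1 - n`. A connected tile of `n` squares cannot span both levels.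
-/

section Telescoping

variable {α : Type*}

theorem List.rel_of_mem_zip_tail {r : α → α → Prop} :
    ∀ {l : List α}, l.IsChain r → ∀ ab ∈ l.zip l.tail, r ab.1 ab.2
  | [], _, _, h | [_], _, _, h => by simp at h
  | a :: b :: l, hch, ab, h => by
    rw [List.isChain_cons_cons] at hch
    simp only [List.tail_cons, List.zip_cons_cons, List.mem_cons] at h
    rcases h with rfl | h
    · exact hch.1
    · exact List.rel_of_mem_zip_tail hch.2 ab h

theorem List.sum_map_zip_tail_sub {G : Type*} [AddCommGroup G] (φ : α → G) :
    ∀ l : List α, ((l.zip l.tail).map fun ab => φ ab.1 - φ ab.2).sum =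
      (l.head?.map φ).getD 0 - (l.getLast?.map φ).getD 0
  | [] | [_] => by simp
  | a :: b :: l => by
    have ih := List.sum_map_zip_tail_sub φ (b :: l)
    simp only [List.tail_cons, List.zip_cons_cons, List.map_cons, List.sum_cons, List.head?_cons,
      Option.map_some, Option.getD_some] at ih ⊢
    rw [ih, List.getLast?_cons_cons]
    abel

theorem List.sum_map_zip_tail_sub_of_head?_eq_getLast? {G : Type*} [AddCommGroup G] (φ : α → G)
    {l : List α} (hl : l.head? = l.getLast?) :
    ((l.zip l.tail).map fun ab => φ ab.1 - φ ab.2).sum = 0 := by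
  rw [List.sum_map_zip_tail_sub, hl, sub_self]

end Telescoping

section Winding

variable {L : List Square}

def windingStep (p : Square) (ab : Square × Square) : ℤ :=
  if ab.1.2 = ab.2.2 ∧ p.2 < ab.1.2 ∧ ab.1.1 = p.1 + 1 ∧ ab.2.1 = p.1 then 1
  else if ab.1.2 = ab.2.2 ∧ p.2 < ab.1.2 ∧ ab.1.1 = p.1 ∧ ab.2.1 = p.1 + 1 then -1
  else 0

theorem sqWinding_eq_sum_windingStep (p : Square) (L : List Square) :
    sqWinding p L = ((L.zip L.tail).map (windingStep p)).sum := rfl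

theorem sqWinding_up_eq {p : Square} (hp : (p.1, p.2 + 1) ∉ L) :
    sqWinding (p.1, p.2 + 1) L = sqWinding p L := by
  simp only [sqWinding_eq_sum_windingStep]
  congr 1
  refine List.map_congr_left fun ⟨a, b⟩ hab => ?_
  have ha : a ≠ (p.1, p.2 + 1) := fun h => hp (h ▸ (List.of_mem_zip hab).1)
  have hb : b ≠ (p.1, p.2 + 1) := fun h => hp (h ▸ List.mem_of_mem_tail (List.of_mem_zip hab).2)
  simp only [ne_eq, Prod.ext_iff, not_and] at ha hb
  simp only [windingStep]
  split_ifs <;> omega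

/-- Moving `p` one column to the right changes each step by `χ a - χ b`, where `χ s` indicates
that `s` lies in column `p.1 + 1` strictly above `p`; around a closed loop these cancel. -/
theorem sqWinding_right_eq (hch : L.IsChain SqAdj) (hcl : L.head? = L.getLast?) {p : Square}
    (hp : (p.1 + 1, p.2) ∉ L) :
    sqWinding (p.1 + 1, p.2) L = sqWinding p L := by
  let χ : Square → ℤ := fun s => if s.1 = p.1 + 1 ∧ p.2 < s.2 then 1 else 0
  have hstep : ∀ ab ∈ L.zip L.tail,
      windingStep p ab = windingStep (p.1 + 1, p.2) ab + (χ ab.1 - χ ab.2) := by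
    rintro ⟨a, b⟩ hab
    have hadj := List.rel_of_mem_zip_tail hch _ hab
    have ha : a ≠ (p.1 + 1, p.2) := fun h => hp (h ▸ (List.of_mem_zip hab).1)
    have hb : b ≠ (p.1 + 1, p.2) :=
      fun h => hp (h ▸ List.mem_of_mem_tail (List.of_mem_zip hab).2)
    simp only [ne_eq, Prod.ext_iff, not_and] at ha hb
    simp only [SqAdj] at hadj
    simp only [windingStep, χ]
    split_ifs <;> omega
  rw [sqWinding_eq_sum_windingStep p, List.map_congr_left hstep, List.sum_map_add,
    List.sum_map_zip_tail_sub_of_head?_eq_getLast? χ hcl, add_zero, sqWinding_eq_sum_windingStep]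

theorem sqWinding_eq_of_sqAdj (hch : L.IsChain SqAdj) (hcl : L.head? = L.getLast?)
    {a b : Square} (hab : SqAdj a b) (ha : a ∉ L) (hb : b ∉ L) :
    sqWinding a L = sqWinding b L := by
  rcases hab with ⟨h₁, h₂ | h₂⟩ | ⟨h₂, h₁ | h₁⟩
  · obtain rfl : a = (b.1, b.2 + 1) := Prod.ext h₁ h₂
    exact sqWinding_up_eq ha
  · obtain rfl : b = (a.1, a.2 + 1) := Prod.ext h₁.symm h₂.symm
    exact (sqWinding_up_eq hb).symm
  · obtain rfl : a = (b.1 + 1, b.2) := Prod.ext h₁ h₂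
    exact sqWinding_right_eq hch hcl ha
  · obtain rfl : b = (a.1 + 1, a.2) := Prod.ext h₁.symm h₂.symm
    exact (sqWinding_right_eq hch hcl hb).symm

theorem sqWinding_eq_of_connOn (hch : L.IsChain SqAdj) (hcl : L.head? = L.getLast?)
    {S : Set Square} (hS : ConnOn S) (hSL : ∀ s ∈ S, s ∉ L) {a b : Square} (ha : a ∈ S)
    (hb : b ∈ S) : sqWinding a L = sqWinding b L := by
  have hpath := hS a ha b hb
  clear hb
  induction hpath with
  | refl => rfl
  | tail _ hstep ih =>
    exact ih.trans (sqWinding_eq_of_sqAdj hch hcl hstep.2.2 (hSL _ hstep.1) (hSL _ hstep.2.1))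

theorem sqWinding_eq_of_forall_notMem_column {x a b : ℤ} (hab : a ≤ b)
    (hcol : ∀ y, a < y → y ≤ b → (x, y) ∉ L) : sqWinding (x, a) L = sqWinding (x, b) L := by
  induction b, hab using Int.leInduction with
  | base => rfl
  | succ b hab ih =>
    rw [ih fun y hay hyb => hcol y hay (by omega)]
    exact (sqWinding_up_eq (hcol (b + 1) (by omega) le_rfl)).symm

theorem sqWinding_eq_zero_of_forall_snd_le {p : Square} (h : ∀ s ∈ L, s.2 ≤ p.2) :
    sqWinding p L = 0 := by
  rw [sqWinding_eq_sum_windingStep]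
  refine List.sum_eq_zero fun k hk => ?_
  obtain ⟨⟨a, b⟩, hab, rfl⟩ := List.mem_map.mp hk
  have := h a (List.of_mem_zip hab).1
  simp only [windingStep]
  split_ifs <;> omega

/-- For a loop strictly above `p`, each step equals `ψ a - ψ b` with `ψ s = -[s.1 ≤ p.1]`. -/
theorem sqWinding_eq_zero_of_forall_lt_snd (hch : L.IsChain SqAdj) (hcl : L.head? = L.getLast?)
    {p : Square} (h : ∀ s ∈ L, p.2 < s.2) : sqWinding p L = 0 := by
  let ψ : Square → ℤ := fun s => if s.1 ≤ p.1 then -1 else 0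
  have hstep : ∀ ab ∈ L.zip L.tail, windingStep p ab = ψ ab.1 - ψ ab.2 := by
    rintro ⟨a, b⟩ hab
    have hadj := List.rel_of_mem_zip_tail hch _ hab
    have ha := h a (List.of_mem_zip hab).1
    have hb := h b (List.mem_of_mem_tail (List.of_mem_zip hab).2)
    simp only [SqAdj] at hadj
    simp only [windingStep, ψ]
    split_ifs <;> omega
  rw [sqWinding_eq_sum_windingStep, List.map_congr_left hstep,
    List.sum_map_zip_tail_sub_of_head?_eq_getLast? ψ hcl]

theorem exists_mem_column_above_of_sqWinding_ne_zero {p : Square} (hw : sqWinding p L ≠ 0) :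
    ∃ y, p.2 < y ∧ (p.1, y) ∈ L := by
  by_contra! hcol
  obtain ⟨B, hB⟩ := ((L.finite_toSet.image Prod.snd).insert p.2).bddAbove
  have hpB : p.2 ≤ B := hB (Set.mem_insert _ _)
  have hLB : ∀ s ∈ L, s.2 ≤ B := fun s hs => hB (Set.mem_insert_of_mem _ ⟨s, hs, rfl⟩)
  refine hw ?_
  calc sqWinding p L = sqWinding (p.1, B) L :=
        sqWinding_eq_of_forall_notMem_column hpB fun y hy _ => hcol y hy
    _ = 0 := sqWinding_eq_zero_of_forall_snd_le hLB

theorem exists_mem_column_below_of_sqWinding_ne_zero (hch : L.IsChain SqAdj)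
    (hcl : L.head? = L.getLast?) {p : Square} (hpL : p ∉ L) (hw : sqWinding p L ≠ 0) :
    ∃ y, y < p.2 ∧ (p.1, y) ∈ L := by
  by_contra! hcol
  obtain ⟨B, hB⟩ := ((L.finite_toSet.image Prod.snd).insert p.2).bddBelow
  have hBp : B ≤ p.2 := hB (Set.mem_insert _ _)
  have hLB : ∀ s ∈ L, B - 1 < s.2 := fun s hs =>
    Int.sub_one_lt_of_le (hB (Set.mem_insert_of_mem _ ⟨s, hs, rfl⟩))
  have hcol' : ∀ y, B - 1 < y → y ≤ p.2 → (p.1, y) ∉ L := fun y _ hy hyL => by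
    rcases hy.lt_or_eq with hy | rfl
    · exact hcol y hy hyL
    · exact hpL hyL
  refine hw ?_
  calc sqWinding p L = sqWinding (p.1, B - 1) L :=
        (sqWinding_eq_of_forall_notMem_column (by omega) hcol').symm
    _ = 0 := sqWinding_eq_zero_of_forall_lt_snd hch hcl hLB

theorem exists_maximal_level_sqWinding_ne_zero {p : Square} (hw : sqWinding p L ≠ 0) :
    ∃ s : Square, sqWinding s L ≠ 0 ∧
      ∀ s' : Square, sqWinding s' L ≠ 0 → s'.1 + s'.2 ≤ s.1 + s.2 := by
  obtain ⟨B, hB⟩ := (L.finite_toSet.image fun s : Square => s.1 + s.2).bddAbove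
  have hbdd : ∀ s : Square, sqWinding s L ≠ 0 → s.1 + s.2 ≤ B := fun s hs => by
    obtain ⟨y, hy, hyL⟩ := exists_mem_column_above_of_sqWinding_ne_zero hs
    have := hB ⟨_, hyL, rfl⟩
    simp only at this
    omega
  obtain ⟨ℓ, ⟨s, hs, rfl⟩, hmax⟩ := Int.exists_greatest_of_bdd
    (P := fun ℓ => ∃ s : Square, sqWinding s L ≠ 0 ∧ s.1 + s.2 = ℓ)
    ⟨B, fun _ ⟨s, hs, hsℓ⟩ => hsℓ ▸ hbdd s hs⟩ ⟨_, p, hw, rfl⟩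
  exact ⟨s, hs, fun s' hs' => hmax _ ⟨s', hs', rfl⟩⟩

/-- Off the loop the winding number propagates upwards and to the right, one level higher. -/
theorem up_right_mem_of_maximal_level (hch : L.IsChain SqAdj) (hcl : L.head? = L.getLast?)
    {s : Square} (hs : sqWinding s L ≠ 0)
    (hmax : ∀ s' : Square, sqWinding s' L ≠ 0 → s'.1 + s'.2 ≤ s.1 + s.2) :
    (s.1, s.2 + 1) ∈ L ∧ (s.1 + 1, s.2) ∈ L := by
  constructor
  · by_contra hup
    have := hmax _ (by rwa [sqWinding_up_eq hup])
    simp only at this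
    omega
  · by_contra hright
    have := hmax _ (by rwa [sqWinding_right_eq hch hcl hright])
    simp only at this
    omega

end Winding

section Tiles

theorem ConnOn.exists_mem_level {t : Set Square} (ht : ConnOn t) {a b : Square} (ha : a ∈ t)
    (hb : b ∈ t) {ν : ℤ} (haν : a.1 + a.2 ≤ ν) (hνb : ν ≤ b.1 + b.2) :
    ∃ s ∈ t, s.1 + s.2 = ν := by
  have hpath := ht a ha b hb
  clear hb
  induction hpath with
  | refl => exact ⟨a, ha, by omega⟩
  | @tail c d _ hcd ih =>
    rcases le_or_gt ν (c.1 + c.2) with hνc | hcν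
    · exact ih hνc
    · refine ⟨d, hcd.2.1, ?_⟩
      rcases hcd.2.2 with ⟨_, h | h⟩ | ⟨_, h | h⟩ <;> omega

theorem ConnOn.level_sub_lt_card {t : Finset Square} (ht : ConnOn ↑t) {a b : Square}
    (ha : a ∈ t) (hb : b ∈ t) : b.1 + b.2 - (a.1 + a.2) < t.card := by
  have hlevels : Finset.Icc (a.1 + a.2) (b.1 + b.2) ⊆ t.image fun s => s.1 + s.2 := by
    intro ν hν
    rw [Finset.mem_Icc] at hν
    obtain ⟨s, hs, rfl⟩ := ht.exists_mem_level ha hb hν.1 hν.2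
    exact Finset.mem_image_of_mem _ hs
  have hcard := (Finset.card_le_card hlevels).trans Finset.card_image_le
  rw [Int.card_Icc] at hcard
  omega

variable {n : ℕ} {t : Finset Square}

theorem IsRibbonTile.eq_of_level_eq (ht : IsRibbonTile n t) {s s' : Square} (hs : s ∈ t)
    (hs' : s' ∈ t) (h : s.1 + s.2 = s'.1 + s'.2) : s = s' := by
  obtain ⟨-, hcard, hcolor⟩ := ht
  have hn : (0 : ℤ) < n := by
    have := Finset.card_pos.mpr ⟨s, hs⟩
    omega
  obtain ⟨_, -, huniq⟩ := hcolor _ (Int.emod_nonneg _ hn.ne') (Int.emod_lt_of_pos _ hn)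
  exact (huniq s ⟨hs, rfl⟩).trans (huniq s' ⟨hs', by rw [h]⟩).symm

theorem IsRibbonTile.exists_level_span (ht : IsRibbonTile n t) (hne : t.Nonempty) :
    ∃ a ∈ t, ∃ b ∈ t, (n : ℤ) ≤ b.1 + b.2 - (a.1 + a.2) + 1 := by
  set levels := t.image fun s : Square => s.1 + s.2
  have hlevels : levels.Nonempty := hne.image _
  have hcard : levels.card = n := by
    rw [Finset.card_image_of_injOn fun s hs s' hs' => ht.eq_of_level_eq hs hs', ht.2.1]
  have hsub : levels ⊆ Finset.Icc (levels.min' hlevels) (levels.max' hlevels) :=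
    fun ν hν => Finset.mem_Icc.mpr ⟨levels.min'_le ν hν, levels.le_max' ν hν⟩
  obtain ⟨a, ha, hamin⟩ := Finset.mem_image.mp (levels.min'_mem hlevels)
  obtain ⟨b, hb, hbmax⟩ := Finset.mem_image.mp (levels.max'_mem hlevels)
  have := Finset.card_le_card hsub
  have := hlevels.card_pos
  rw [Int.card_Icc, hcard] at *
  exact ⟨a, ha, b, hb, by omega⟩

theorem exists_mem_level_of_mem_union {t₁ t₂ : Finset Square} (ht₁ : IsRibbonTile n t₁)
    (ht₂ : IsRibbonTile n t₂) {u v : Square} (hu : u ∈ t₁ ∪ t₂) (hv : v ∈ t₁ ∪ t₂) (huv : u ≠ v)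
    (hlevel : u.1 + u.2 = v.1 + v.2) :
    (∃ s ∈ t₁, s.1 + s.2 = u.1 + u.2) ∧ (∃ s ∈ t₂, s.1 + s.2 = u.1 + u.2) := by
  rw [Finset.mem_union] at hu hv
  rcases hu with hu | hu <;> rcases hv with hv | hv
  · exact absurd (ht₁.eq_of_level_eq hu hv hlevel) huv
  · exact ⟨⟨u, hu, rfl⟩, ⟨v, hv, hlevel.symm⟩⟩
  · exact ⟨⟨v, hv, hlevel.symm⟩, ⟨u, hu, rfl⟩⟩
  · exact absurd (ht₂.eq_of_level_eq hu hv hlevel) huv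

theorem IsRibbonTiling.eq_of_mem {R : Finset Square} {α : Finset (Finset Square)}
    (hα : IsRibbonTiling n R α) {t u : Finset Square} (ht : t ∈ α) (hu : u ∈ α) {s : Square}
    (hst : s ∈ t) (hsu : s ∈ u) : t = u :=
  (hα.2.2 s (hα.2.1 t ht hst)).unique ⟨ht, hst⟩ ⟨hu, hsu⟩

end Tiles

theorem IsRibbonTiling.sqWinding_eq_zero {n : ℕ} {R : Finset Square} {α : Finset (Finset Square)}
    (hα : IsRibbonTiling n R α) {t₁ t₂ : Finset Square} (h₁ : t₁ ∈ α) (h₂ : t₂ ∈ α)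
    {L : List Square} (hch : L.IsChain SqAdj) (hcl : L.head? = L.getLast?)
    (hL : ∀ s ∈ L, s ∈ t₁ ∪ t₂) {p : Square} (hpR : p ∈ R) (hp : p ∉ t₁ ∪ t₂) :
    sqWinding p L = 0 := by
  by_contra hw
  obtain ⟨t₃, ⟨h₃, hpt₃⟩, -⟩ := hα.2.2 p hpR
  have ht₃L : ∀ s ∈ (t₃ : Set Square), s ∉ L := fun s hs hsL => by
    have hsame : ∀ t ∈ α, s ∈ t → p ∈ t := fun t ht hst => hα.eq_of_mem h₃ ht hs hst ▸ hpt₃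
    exact hp (Finset.mem_union.mpr
      ((Finset.mem_union.mp (hL s hsL)).imp (hsame t₁ h₁) (hsame t₂ h₂)))
  have ht₃w : ∀ s ∈ t₃, sqWinding s L ≠ 0 := fun s hs => by
    rwa [← sqWinding_eq_of_connOn hch hcl (hα.1 t₃ h₃).1 ht₃L hpt₃ hs]
  obtain ⟨s, hs, hmax⟩ := exists_maximal_level_sqWinding_ne_zero hw
  obtain ⟨hup, hright⟩ := up_right_mem_of_maximal_level hch hcl hs hmax
  have htop := exists_mem_level_of_mem_union (hα.1 t₁ h₁) (hα.1 t₂ h₂) (hL _ hup) (hL _ hright)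
    (by simp [Prod.ext_iff]) (by simp only; ring)
  obtain ⟨a, ha, b, hb, hspan⟩ := (hα.1 t₃ h₃).exists_level_span ⟨p, hpt₃⟩
  have hbs := hmax b (ht₃w b hb)
  obtain ⟨y, hya, hyL⟩ :=
    exists_mem_column_below_of_sqWinding_ne_zero hch hcl (ht₃L a ha) (ht₃w a ha)
  have hunreachable :
      ∀ t ∈ α, (a.1, y) ∈ t → (∃ x ∈ t, x.1 + x.2 = s.1 + (s.2 + 1)) → False :=
    fun t ht hyt ⟨x, hx, hxs⟩ => by
      have := (hα.1 t ht).1.level_sub_lt_card hyt hx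
      rw [(hα.1 t ht).2.1] at this
      simp only at this
      omega
  rcases Finset.mem_union.mp (hL _ hyL) with hy | hy
  · exact hunreachable t₁ h₁ hy htop.1
  · exact hunreachable t₂ h₂ hy htop.2

theorem ribbon_tiling_pair_union_simply_connected_general
    (n : ℕ) (R : Finset Square)
    (hsc : SimplyConnectedSq ↑R)
    (α : Finset (Finset Square)) (hα : IsRibbonTiling n R α)
    (t₁ t₂ : Finset Square) (h₁ : t₁ ∈ α) (h₂ : t₂ ∈ α) :
    SimplyConnectedSq ↑(t₁ ∪ t₂) := by
  rintro p hp L ⟨hLne, hL, hch, hcl⟩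
  have hL' : ∀ s ∈ L, s ∈ t₁ ∪ t₂ := fun s hs => by simpa using hL s hs
  by_cases hpR : p ∈ R
  · exact hα.sqWinding_eq_zero h₁ h₂ hch hcl hL' hpR (by simpa using hp)
  · refine hsc p (by simpa using hpR) L ⟨hLne, fun s hs => ?_, hch, hcl⟩
    exact Finset.mem_coe.mpr (Finset.union_subset (hα.2.1 t₁ h₁) (hα.2.1 t₂ h₂) (hL' s hs))

/-- In an order-`n` ribbon tiling of a simply connected
region, the union of any two distinct tiles whose union is connected is
simply connected. -/
theorem ribbon_tiling_pair_union_simply_connected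
    (n : ℕ) (hn : 2 ≤ n) (R : Finset Square)
    (hreg : IsRegion R) (hsc : SimplyConnectedSq ↑R)
    (α : Finset (Finset Square)) (hα : IsRibbonTiling n R α)
    (t₁ t₂ : Finset Square) (h₁ : t₁ ∈ α) (h₂ : t₂ ∈ α) (hne : t₁ ≠ t₂)
    (hconn : ConnOn ↑(t₁ ∪ t₂)) :
    SimplyConnectedSq ↑(t₁ ∪ t₂) :=
  ribbon_tiling_pair_union_simply_connected_general n R hsc α hα t₁ t₂ h₁ h₂
end

section
/- If t₁ and t₂ are disjoint order-n ribbon tiles, then t₁ ≺ t₂ and t₂ ≺ t₁ cannot both hold. -/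
/-!
Along a ribbon tile the level `x + y` takes every value of an interval exactly once, and each
step to the next level changes the diagonal coordinate `x - y` by `±1`. In these coordinates
`s ≺ s'` says that the levels differ by at most one and `x - y < x' - y'`. For two disjoint tiles,
moving one square of a pair `(s₁, s₂) ∈ t₁ × t₂` with levels at most one apart to its neighbour
in its tile cannot reverse this comparison: at equal levels the diagonal coordinates have the
same parity and differ, so they are at least two apart. Any two such pairs are joined by such
moves, so `s₁ ≺ s₂` for one pair forces it for all pairs, which excludes `s₂ ≺ s₁`.
-/

theorem SqAdj.symm {s t : Square} (h : SqAdj s t) : SqAdj t s := by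
  unfold SqAdj at *
  omega

theorem sqPrec_iff {s t : Square} :
    sqPrec s t ↔ (s.1 + s.2 - (t.1 + t.2)).natAbs ≤ 1 ∧ s.1 - s.2 < t.1 - t.2 := by
  unfold sqPrec
  rw [Int.abs_eq_natAbs]
  omega

theorem sqPrec_of_sqAdj_left {a a' b : Square} (h : sqPrec a b) (ha : SqAdj a a')
    (hband : (a'.1 + a'.2 - (b.1 + b.2)).natAbs ≤ 1) (hne : a' ≠ b) : sqPrec a' b := by
  rw [sqPrec_iff] at *
  rw [Ne, Prod.ext_iff] at hne
  unfold SqAdj at ha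
  omega

theorem sqPrec_of_sqAdj_right {a b b' : Square} (h : sqPrec a b) (hb : SqAdj b b')
    (hband : (a.1 + a.2 - (b'.1 + b'.2)).natAbs ≤ 1) (hne : a ≠ b') : sqPrec a b' := by
  rw [sqPrec_iff] at *
  rw [Ne, Prod.ext_iff] at hne
  unfold SqAdj at hb
  omega

theorem ConnOn.exists_sqAdj_crossing_level {S : Set Square} (hS : ConnOn S) {p q : Square}
    (hp : p ∈ S) (hq : q ∈ S) {ℓ : ℤ} (hpℓ : p.1 + p.2 ≤ ℓ) (hℓq : ℓ < q.1 + q.2) :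
    ∃ a ∈ S, ∃ b ∈ S, SqAdj a b ∧ a.1 + a.2 = ℓ ∧ b.1 + b.2 = ℓ + 1 := by
  induction hS p hp q hq generalizing ℓ with
  | refl => omega
  | @tail b c _ hbc ih =>
    obtain ⟨hb, hc, hadj⟩ := hbc
    by_cases hbℓ : ℓ < b.1 + b.2
    · exact ih hb hpℓ hbℓ
    · refine ⟨b, hb, c, hc, hadj, ?_, ?_⟩ <;> unfold SqAdj at hadj <;> omega

theorem IsRibbonTile.eq_of_level_eq_s19 {n : ℕ} {t : Finset Square} (h : IsRibbonTile n t)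
    {p q : Square} (hp : p ∈ t) (hq : q ∈ t) (hpq : p.1 + p.2 = q.1 + q.2) : p = q := by
  obtain ⟨-, hcard, hcolor⟩ := h
  rcases Nat.eq_zero_or_pos n with rfl | hn
  · simp [Finset.card_eq_zero.mp hcard] at hp
  have hn' : (0 : ℤ) < n := by exact_mod_cast hn
  exact (hcolor _ (Int.emod_nonneg _ hn'.ne') (Int.emod_lt_of_pos _ hn')).unique
    ⟨hp, rfl⟩ ⟨hq, by rw [hpq]⟩

theorem IsRibbonTile.exists_sqAdj_toward {n : ℕ} {t : Finset Square} (h : IsRibbonTile n t)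
    {p q : Square} (hp : p ∈ t) (hq : q ∈ t) (hpq : p.1 + p.2 ≠ q.1 + q.2) :
    ∃ p' ∈ t, SqAdj p p' ∧
      (q.1 + q.2 - (p'.1 + p'.2)).natAbs < (q.1 + q.2 - (p.1 + p.2)).natAbs := by
  rcases lt_or_gt_of_ne hpq with hlt | hgt
  · obtain ⟨a, ha, b, hb, hab, haℓ, hbℓ⟩ := h.1.exists_sqAdj_crossing_level hp hq le_rfl hlt
    obtain rfl := h.eq_of_level_eq_s19 ha hp haℓ
    exact ⟨b, hb, hab, by omega⟩
  · obtain ⟨a, ha, b, hb, hab, haℓ, hbℓ⟩ :=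
      h.1.exists_sqAdj_crossing_level hq hp (ℓ := p.1 + p.2 - 1) (by omega) (by omega)
    obtain rfl := h.eq_of_level_eq_s19 hb hp (by omega)
    exact ⟨a, ha, hab.symm, by omega⟩

theorem IsRibbonTile.exists_step_toward {n : ℕ} {t₁ t₂ : Finset Square}
    (h₁ : IsRibbonTile n t₁) (h₂ : IsRibbonTile n t₂)
    {p₁ p₂ q₁ q₂ : Square} (hp₁ : p₁ ∈ t₁) (hp₂ : p₂ ∈ t₂) (hq₁ : q₁ ∈ t₁) (hq₂ : q₂ ∈ t₂)
    (hp : (p₁.1 + p₁.2 - (p₂.1 + p₂.2)).natAbs ≤ 1)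
    (hq : (q₁.1 + q₁.2 - (q₂.1 + q₂.2)).natAbs ≤ 1)
    (hpq : p₁.1 + p₁.2 ≠ q₁.1 + q₁.2 ∨ p₂.1 + p₂.2 ≠ q₂.1 + q₂.2) :
    (∃ p₁' ∈ t₁, SqAdj p₁ p₁' ∧
      (q₁.1 + q₁.2 - (p₁'.1 + p₁'.2)).natAbs < (q₁.1 + q₁.2 - (p₁.1 + p₁.2)).natAbs ∧
      (p₁'.1 + p₁'.2 - (p₂.1 + p₂.2)).natAbs ≤ 1) ∨
    (∃ p₂' ∈ t₂, SqAdj p₂ p₂' ∧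
      (q₂.1 + q₂.2 - (p₂'.1 + p₂'.2)).natAbs < (q₂.1 + q₂.2 - (p₂.1 + p₂.2)).natAbs ∧
      (p₁.1 + p₁.2 - (p₂'.1 + p₂'.2)).natAbs ≤ 1) := by
  by_contra! ⟨move₁, move₂⟩
  have stuck₁ : p₁.1 + p₁.2 = q₁.1 + q₁.2 ∨ ∃ p₁', SqAdj p₁ p₁' ∧
      (q₁.1 + q₁.2 - (p₁'.1 + p₁'.2)).natAbs < (q₁.1 + q₁.2 - (p₁.1 + p₁.2)).natAbs ∧
      1 < (p₁'.1 + p₁'.2 - (p₂.1 + p₂.2)).natAbs := by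
    refine (eq_or_ne _ _).imp id fun hne ↦ ?_
    obtain ⟨p₁', hp₁', hadj, hcloser⟩ := h₁.exists_sqAdj_toward hp₁ hq₁ hne
    exact ⟨p₁', hadj, hcloser, move₁ p₁' hp₁' hadj hcloser⟩
  have stuck₂ : p₂.1 + p₂.2 = q₂.1 + q₂.2 ∨ ∃ p₂', SqAdj p₂ p₂' ∧
      (q₂.1 + q₂.2 - (p₂'.1 + p₂'.2)).natAbs < (q₂.1 + q₂.2 - (p₂.1 + p₂.2)).natAbs ∧
      1 < (p₁.1 + p₁.2 - (p₂'.1 + p₂'.2)).natAbs := by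
    refine (eq_or_ne _ _).imp id fun hne ↦ ?_
    obtain ⟨p₂', hp₂', hadj, hcloser⟩ := h₂.exists_sqAdj_toward hp₂ hq₂ hne
    exact ⟨p₂', hadj, hcloser, move₂ p₂' hp₂' hadj hcloser⟩
  -- A blocked move goes in the direction in which the other square already lags one level
  -- behind, and then the two targets cannot be within one level of each other.
  rcases stuck₁ with hlevel₁ | ⟨p₁', hadj₁, hcloser₁, hfar₁⟩ <;>
    rcases stuck₂ with hlevel₂ | ⟨p₂', hadj₂, hcloser₂, hfar₂⟩ <;>
    unfold SqAdj at * <;> omega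

theorem IsRibbonTile.sqPrec_of_disjoint {n : ℕ} {t₁ t₂ : Finset Square}
    (h₁ : IsRibbonTile n t₁) (h₂ : IsRibbonTile n t₂) (hdisj : Disjoint t₁ t₂)
    {p₁ p₂ q₁ q₂ : Square} (hp₁ : p₁ ∈ t₁) (hp₂ : p₂ ∈ t₂) (hq₁ : q₁ ∈ t₁) (hq₂ : q₂ ∈ t₂)
    (hp : sqPrec p₁ p₂) (hq : (q₁.1 + q₁.2 - (q₂.1 + q₂.2)).natAbs ≤ 1) : sqPrec q₁ q₂ := by
  obtain ⟨N, hN⟩ : ∃ N : ℕ,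
      (q₁.1 + q₁.2 - (p₁.1 + p₁.2)).natAbs + (q₂.1 + q₂.2 - (p₂.1 + p₂.2)).natAbs = N :=
    ⟨_, rfl⟩
  induction N generalizing p₁ p₂ with
  | zero =>
    rwa [h₁.eq_of_level_eq_s19 hq₁ hp₁ (by omega), h₂.eq_of_level_eq_s19 hq₂ hp₂ (by omega)]
  | succ N ih =>
    rcases h₁.exists_step_toward h₂ hp₁ hp₂ hq₁ hq₂ (sqPrec_iff.mp hp).1 hq (by omega) with
      ⟨p₁', hp₁', hadj, hcloser, hband⟩ | ⟨p₂', hp₂', hadj, hcloser, hband⟩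
    · have hne : p₁' ≠ p₂ := fun h ↦ Finset.disjoint_left.mp hdisj hp₁' (h ▸ hp₂)
      exact ih hp₁' hp₂ (sqPrec_of_sqAdj_left hp hadj hband hne)
        (by unfold SqAdj at hadj; omega)
    · have hne : p₁ ≠ p₂' := fun h ↦ Finset.disjoint_left.mp hdisj hp₁ (h ▸ hp₂')
      exact ih hp₁ hp₂' (sqPrec_of_sqAdj_right hp hadj hband hne)
        (by unfold SqAdj at hadj; omega)

theorem disjoint_ribbon_tiles_not_both_prec_general
    (n : ℕ) (t₁ t₂ : Finset Square)
    (h₁ : IsRibbonTile n t₁) (h₂ : IsRibbonTile n t₂)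
    (hdisj : Disjoint t₁ t₂) :
    ¬ (TilePrec t₁ t₂ ∧ TilePrec t₂ t₁) := by
  rintro ⟨⟨p₁, hp₁, p₂, hp₂, hp⟩, ⟨q₂, hq₂, q₁, hq₁, hq⟩⟩
  have hq' := h₁.sqPrec_of_disjoint h₂ hdisj hp₁ hp₂ hq₁ hq₂ hp
    (by have := (sqPrec_iff.mp hq).1; omega)
  rw [sqPrec_iff] at hq hq'
  omega

/-- If `t₁` and `t₂` are disjoint order-`n` ribbon tiles,
then `t₁ ≺ t₂` and `t₂ ≺ t₁` cannot both hold. -/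
theorem disjoint_ribbon_tiles_not_both_prec
    (n : ℕ) (hn : 2 ≤ n) (t₁ t₂ : Finset Square)
    (h₁ : IsRibbonTile n t₁) (h₂ : IsRibbonTile n t₂)
    (hdisj : Disjoint t₁ t₂) :
    ¬ (TilePrec t₁ t₂ ∧ TilePrec t₂ t₁) :=
  disjoint_ribbon_tiles_not_both_prec_general n t₁ t₂ h₁ h₂ hdisj
end
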